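/- Let X be positive semidefinite and Y positive definite on a finite-dimensional Hilbert space, and let X^{-1} denote the pseudoinverse of X on its support. Then ‖X^{1/2}(Y^{-1} − X^{-1})X^{1/2}‖ ≤ ‖(Y^{-1} − X^{-1})X‖. -/

import Mathlib

open scoped Matrix.Norms.L2Operator ComplexOrder

/-- The Moore–Penrose pseudoinverse of a Hermitian matrix, taken on its support
(defined via the spectral decomposition, with `(0 : ℝ)⁻¹ = 0`). -/
noncomputable def Matrix.IsHermitian.pinv {n : Type*} [Fintype n] [DecidableEq n]
    {A : Matrix n n ℂ} (hA : A.IsHermitian) : Matrix n n ℂ :=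
  hA.eigenvectorUnitary.1 *
    Matrix.diagonal (fun i => (((hA.eigenvalues i)⁻¹ : ℝ) : ℂ)) *
    (star hA.eigenvectorUnitary.1)

noncomputable def Matrix.PosSemidef.sqrt {n 𝕜 : Type*} [Fintype n] [RCLike 𝕜] [DecidableEq n]
    {A : Matrix n n 𝕜} (hA : A.PosSemidef) : Matrix n n 𝕜 :=
  hA.1.eigenvectorUnitary.1 * Matrix.diagonal ((↑) ∘ (√·) ∘ hA.1.eigenvalues) *
    (star hA.1.eigenvectorUnitary.1)

lemma Matrix.PosSemidef.sqrt_isHermitian {n : Type*} [Fintype n] [DecidableEq n]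
    {A : Matrix n n ℂ} (hA : A.PosSemidef) : hA.sqrt.IsHermitian := by
  unfold Matrix.PosSemidef.sqrt
  have hfun : (star (RCLike.ofReal ∘ (√·) ∘ hA.1.eigenvalues : n → ℂ)) =
      (RCLike.ofReal ∘ (√·) ∘ hA.1.eigenvalues : n → ℂ) := by
    funext i
    simp [Complex.conj_ofReal]
  simp only [Matrix.IsHermitian, Matrix.star_eq_conjTranspose, Matrix.conjTranspose_mul,
    Matrix.conjTranspose_conjTranspose, Matrix.diagonal_conjTranspose, hfun, mul_assoc]

lemma Matrix.PosSemidef.sqrt_mul_self {n : Type*} [Fintype n] [DecidableEq n]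
    {A : Matrix n n ℂ} (hA : A.PosSemidef) : hA.sqrt * hA.sqrt = A := by
  unfold Matrix.PosSemidef.sqrt
  have hU : star hA.1.eigenvectorUnitary.1 * hA.1.eigenvectorUnitary.1 = 1 :=
    Unitary.coe_star_mul_self _
  have hD : Matrix.diagonal (RCLike.ofReal ∘ (√·) ∘ hA.1.eigenvalues : n → ℂ) *
      Matrix.diagonal (RCLike.ofReal ∘ (√·) ∘ hA.1.eigenvalues : n → ℂ) =
      Matrix.diagonal (RCLike.ofReal ∘ hA.1.eigenvalues) := by
    rw [Matrix.diagonal_mul_diagonal]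
    congr 1
    funext i
    simp only [Function.comp_apply]
    rw [← RCLike.ofReal_mul, Real.mul_self_sqrt (hA.eigenvalues_nonneg i)]
  conv_rhs => rw [hA.1.spectral_theorem]
  rw [Unitary.conjStarAlgAut_apply]
  calc _ = hA.1.eigenvectorUnitary.1 * Matrix.diagonal (RCLike.ofReal ∘ (√·) ∘ hA.1.eigenvalues : n → ℂ) *
      (star hA.1.eigenvectorUnitary.1 * hA.1.eigenvectorUnitary.1) *
      Matrix.diagonal (RCLike.ofReal ∘ (√·) ∘ hA.1.eigenvalues : n → ℂ) * star hA.1.eigenvectorUnitary.1 := by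
        simp only [mul_assoc]
    _ = _ := by
        rw [hU, mul_one]
        simp only [mul_assoc]
        rw [← mul_assoc (Matrix.diagonal _) (Matrix.diagonal _), hD]

lemma Matrix.IsHermitian.pinv_isHermitian {n : Type*} [Fintype n] [DecidableEq n]
    {A : Matrix n n ℂ} (hA : A.IsHermitian) : hA.pinv.IsHermitian := by
  unfold Matrix.IsHermitian.pinv
  have hfun : (star fun i => (((hA.eigenvalues i)⁻¹ : ℝ) : ℂ)) =
      fun i => (((hA.eigenvalues i)⁻¹ : ℝ) : ℂ) := by
    funext i
    simp [Complex.conj_ofReal]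
  simp only [Matrix.IsHermitian, Matrix.star_eq_conjTranspose, Matrix.conjTranspose_mul,
    Matrix.conjTranspose_conjTranspose, Matrix.diagonal_conjTranspose, hfun, mul_assoc]

lemma spectralRadius_mul_comm' {A : Type*} [NormedRing A] [NormedAlgebra ℂ A] (a b : A) :
    spectralRadius ℂ (a * b) = spectralRadius ℂ (b * a) := by
  have key : ∀ c d : A, spectralRadius ℂ (c * d) ≤ spectralRadius ℂ (d * c) := by
    intro c d
    rw [spectralRadius, spectralRadius]
    refine iSup₂_le fun k hk => ?_
    by_cases hk0 : k = 0
    · simp [hk0]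
    · have : k ∈ spectrum ℂ (d * c) := by
        have := spectrum.nonzero_mul_comm (𝕜 := ℂ) c d
        have hmem : k ∈ spectrum ℂ (c * d) \ {0} := ⟨hk, hk0⟩
        rw [this] at hmem
        exact hmem.1
      exact le_iSup₂ (f := fun k (_ : k ∈ spectrum ℂ (d * c)) => (‖k‖₊ : ENNReal)) k this
  exact le_antisymm (key a b) (key b a)

noncomputable instance matrixCStarAlgebra {n : Type*} [Fintype n] [DecidableEq n] :
    CStarAlgebra (Matrix n n ℂ) :=
  { Matrix.instL2OpNormedRing, Matrix.instCStarRing, Matrix.instL2OpNormedAlgebra,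
    (inferInstance : StarRing (Matrix n n ℂ)),
    (inferInstance : CompleteSpace (Matrix n n ℂ)),
    (inferInstance : StarModule ℂ (Matrix n n ℂ)) with }

/-- For `X ≥ 0` and `Y > 0`,
`‖X^{1/2}(Y⁻¹ − X⁻¹)X^{1/2}‖ ≤ ‖(Y⁻¹ − X⁻¹)X‖`, where `X⁻¹` is the
pseudoinverse of `X` on its support. -/
theorem sqrt_conj_norm_le_mul_norm {n : Type*} [Fintype n] [DecidableEq n]
    {X Y : Matrix n n ℂ} (hX : X.PosSemidef) (hY : Y.PosDef) :
    ‖hX.sqrt * (Y⁻¹ - hX.1.pinv) * hX.sqrt‖ ≤ ‖(Y⁻¹ - hX.1.pinv) * X‖ := by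
  cases isEmpty_or_nonempty n with
  | inl h =>
    have : hX.sqrt * (Y⁻¹ - hX.1.pinv) * hX.sqrt = (Y⁻¹ - hX.1.pinv) * X :=
      Subsingleton.elim _ _
    rw [this]
  | inr h =>
    haveI : Nontrivial (Matrix n n ℂ) := inferInstance
    set A := Y⁻¹ - hX.1.pinv with hAdef
    have hA : A.IsHermitian := (hY.1.inv).sub hX.1.pinv_isHermitian
    have hS : hX.sqrt.IsHermitian := hX.sqrt_isHermitian
    have hM : IsSelfAdjoint (hX.sqrt * A * hX.sqrt) := by
      show star _ = _
      simp only [Matrix.star_eq_conjTranspose, Matrix.conjTranspose_mul, hA.eq, hS.eq,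
        mul_assoc]
    have h1 : spectralRadius ℂ (hX.sqrt * A * hX.sqrt) = ‖hX.sqrt * A * hX.sqrt‖₊ :=
      hM.spectralRadius_eq_nnnorm
    have h2 : spectralRadius ℂ (hX.sqrt * A * hX.sqrt) = spectralRadius ℂ (A * X) := by
      have : hX.sqrt * A * hX.sqrt = hX.sqrt * (A * hX.sqrt) := by rw [mul_assoc]
      rw [this, spectralRadius_mul_comm', mul_assoc, hX.sqrt_mul_self]
    have h3 : spectralRadius ℂ (A * X) ≤ ‖A * X‖₊ := spectrum.spectralRadius_le_nnnorm _
    have : (‖hX.sqrt * A * hX.sqrt‖₊ : ENNReal) ≤ ‖A * X‖₊ := by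
      rw [← h1, h2]; exact h3
    have := ENNReal.coe_le_coe.mp this
    exact_mod_cast this
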